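/- arXiv:2210.05330 — 6 statements merged into one kernel-verified Lean document; each statement's English description precedes it below -/
import Mathlib

section
/- (Pointwise sandwich lemma underlying Theorem 1, Case I.) Assume the setup below. Fix x ∈ X and a label j ∈ Fin k, and suppose: v(x) = y'(x); E_C(x, j) ≤ α; and α ≤ −σ_j(x) + τ_{y'(x) y'(x)} · P_{w(x)}(x) + ∑_{l ≠ y'(x)} τ_{l y'(x)} · P_l(x). Then P_{w(x)}(x) ≤ P_{y'(x)}(x) ≤ P_{w(x)}(x) + ε / τ_{y'(x) y'(x)}. -/
open Finset

/- Splitting off the diagonal term, `P̃_{y'} = τ_{y'y'} P_{y'} + R` with `R` the off-diagonal sum.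
The threshold conditions give `σ_{y'} ≤ τ_{y'y'} P_w + R`, while the approximation bound gives
`σ_{y'} ≥ τ_{y'y'} P_{y'} + R - ε`; cancelling `R` and dividing by `τ_{y'y'} > 0` yields the upper
bound. The lower bound is Bayes optimality of `v = y'`. -/

theorem le_add_div_of_abs_sub_le {s t a b r ε : ℝ} (ht : 0 < t)
    (hs_approx : |s - (t * a + r)| ≤ ε) (hs_le : s ≤ t * b + r) : a ≤ b + ε / t := by
  have hmul : (a - b) * t ≤ ε := by linarith [(abs_le.mp hs_approx).1]
  linarith [(le_div_iff₀ ht).mpr hmul]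

theorem confes_pointwise_caseI_general
    {X : Type*} {k : ℕ}
    (P : X → Fin k → ℝ)
    (τ : Fin k → Fin k → ℝ)
    (hτ_diag : ∀ j, 0 < τ j j)
    (v w y' : X → Fin k)
    (hv : ∀ x l, P x l ≤ P x (v x))
    (f : X → Fin k → ℝ)
    (ε : ℝ)
    (happrox : ∀ x l, |f x l - ∑ i, τ i l * P x i| ≤ ε)
    (α : ℝ) (x : X) (j : Fin k)
    (hvy : v x = y' x)
    (hEC : f x (y' x) - f x j ≤ α)
    (hα : α ≤ -f x j + τ (y' x) (y' x) * P x (w x)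
        + ∑ l ∈ Finset.univ.erase (y' x), τ l (y' x) * P x l) :
    P x (w x) ≤ P x (y' x) ∧ P x (y' x) ≤ P x (w x) + ε / τ (y' x) (y' x) := by
  have happrox_split := happrox x (y' x)
  rw [← add_sum_erase _ _ (mem_univ (y' x))] at happrox_split
  exact ⟨hvy ▸ hv x (w x), le_add_div_of_abs_sub_le (hτ_diag _) happrox_split (by linarith)⟩

theorem confes_pointwise_caseI
    {X : Type*} {k : ℕ} (hk : 2 ≤ k)
    (P : X → Fin k → ℝ)
    (hP_nonneg : ∀ x l, 0 ≤ P x l) (hP_sum : ∀ x, ∑ l, P x l = 1)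
    (τ : Fin k → Fin k → ℝ)
    (hτ_nonneg : ∀ l j, 0 ≤ τ l j) (hτ_sum : ∀ l, ∑ j, τ l j = 1)
    (hτ_diag : ∀ j, 0 < τ j j)
    (v w y' : X → Fin k)
    (hv : ∀ x l, P x l ≤ P x (v x))
    (hw_ne : ∀ x, w x ≠ v x)
    (hw : ∀ x l, l ≠ v x → P x l ≤ P x (w x))
    (f : X → Fin k → ℝ)
    (hf_nonneg : ∀ x l, 0 ≤ f x l) (hf_sum : ∀ x, ∑ l, f x l = 1)
    (hy' : ∀ x l, f x l ≤ f x (y' x))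
    (ε : ℝ) (hε : 0 < ε)
    (happrox : ∀ x l, |f x l - ∑ i, τ i l * P x i| ≤ ε)
    (α : ℝ) (x : X) (j : Fin k)
    (hvy : v x = y' x)
    (hEC : f x (y' x) - f x j ≤ α)
    (hα : α ≤ -f x j + τ (y' x) (y' x) * P x (w x)
        + ∑ l ∈ Finset.univ.erase (y' x), τ l (y' x) * P x l) :
    P x (w x) ≤ P x (y' x) ∧ P x (y' x) ≤ P x (w x) + ε / τ (y' x) (y' x) :=
  confes_pointwise_caseI_general P τ hτ_diag v w y' hv f ε happrox α x j hvy hEC hα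
end

section
/- (Pointwise sandwich lemma underlying Theorem 1, Case II.) Assume the setup below. Fix x ∈ X and a label j ∈ Fin k, and suppose: j = v(x); y'(x) ≠ j; E_C(x, j) > α; and α ≥ σ_{y'(x)}(x) − τ_{jj} · P_{w(x)}(x) − ∑_{l ≠ j} τ_{lj} · P_l(x). Then P_{w(x)}(x) ≤ P_j(x) < P_{w(x)}(x) + ε / τ_{jj}. -/
open MeasureTheory Finset

/-! The hypotheses on `α` say that `σ_j(x)` lies below `τ_jj P_w(x) + ∑_{l ≠ j} τ_lj P_l(x)`,
while `σ_j(x)` is within `ε` of `P̃_j(x) = τ_jj P_j(x) + ∑_{l ≠ j} τ_lj P_l(x)`. The off-diagonal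
sums cancel, leaving `τ_jj (P_j(x) - P_w(x)) < ε`; the lower bound is just `j = v(x)`. -/

lemma lt_add_div_diag_of_abs_sub_le {ι : Type*} [Fintype ι] [DecidableEq ι]
    (τ : ι → ι → ℝ) (p : ι → ℝ) {j : ι} (hτ : 0 < τ j j) {s q ε : ℝ}
    (hs : |s - ∑ i, τ i j * p i| ≤ ε)
    (hlt : s < τ j j * q + ∑ i ∈ univ.erase j, τ i j * p i) :
    p j < q + ε / τ j j := by
  have hsplit := add_sum_erase univ (fun i => τ i j * p i) (mem_univ j)
  have hdiag : τ j j * (p j - q) < ε := by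
    linarith [(abs_le.mp hs).1]
  rw [← sub_lt_iff_lt_add', lt_div_iff₀ hτ]
  linarith

theorem confes_pointwise_caseII_general
    {X : Type*} {k : ℕ}
    (P : X → Fin k → ℝ)
    (τ : Fin k → Fin k → ℝ)
    (hτ_diag : ∀ j, 0 < τ j j)
    (v w y' : X → Fin k)
    (hv : ∀ x l, P x l ≤ P x (v x))
    (f : X → Fin k → ℝ)
    (ε : ℝ)
    (happrox : ∀ x l, |f x l - ∑ i, τ i l * P x i| ≤ ε)
    (α : ℝ) (x : X) (j : Fin k)
    (hjv : j = v x)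
    (hEC : α < f x (y' x) - f x j)
    (hα : f x (y' x) - τ j j * P x (w x)
        - ∑ l ∈ Finset.univ.erase j, τ l j * P x l ≤ α) :
    P x (w x) ≤ P x j ∧ P x j < P x (w x) + ε / τ j j :=
  ⟨hjv ▸ hv x (w x),
    lt_add_div_diag_of_abs_sub_le τ (P x) (hτ_diag j) (happrox x j) (by linarith)⟩

theorem confes_pointwise_caseII
    {X : Type*} {k : ℕ} (hk : 2 ≤ k)
    (P : X → Fin k → ℝ)
    (hP_nonneg : ∀ x l, 0 ≤ P x l) (hP_sum : ∀ x, ∑ l, P x l = 1)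
    (τ : Fin k → Fin k → ℝ)
    (hτ_nonneg : ∀ l j, 0 ≤ τ l j) (hτ_sum : ∀ l, ∑ j, τ l j = 1)
    (hτ_diag : ∀ j, 0 < τ j j)
    (v w y' : X → Fin k)
    (hv : ∀ x l, P x l ≤ P x (v x))
    (hw_ne : ∀ x, w x ≠ v x)
    (hw : ∀ x l, l ≠ v x → P x l ≤ P x (w x))
    (f : X → Fin k → ℝ)
    (hf_nonneg : ∀ x l, 0 ≤ f x l) (hf_sum : ∀ x, ∑ l, f x l = 1)
    (hy' : ∀ x l, f x l ≤ f x (y' x))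
    (ε : ℝ) (hε : 0 < ε)
    (happrox : ∀ x l, |f x l - ∑ i, τ i l * P x i| ≤ ε)
    (α : ℝ) (x : X) (j : Fin k)
    (hjv : j = v x)
    (hy'j : y' x ≠ j)
    (hEC : α < f x (y' x) - f x j)
    (hα : f x (y' x) - τ j j * P x (w x)
        - ∑ l ∈ Finset.univ.erase j, τ l j * P x l ≤ α) :
    P x (w x) ≤ P x j ∧ P x j < P x (w x) + ε / τ j j :=
  confes_pointwise_caseII_general P τ hτ_diag v w y' hv f ε happrox α x j hjv hEC hα
end

section
/- (Pointwise sandwich lemma underlying Lemma 1.) Assume the setup below. Fix x ∈ X and a label j ∈ Fin k, and suppose: j = v(x); σ_j(x) < α; and α ≤ τ_{jj} · P_{w(x)}(x) + ∑_{l ≠ j} τ_{lj} · P_l(x). Then P_{w(x)}(x) ≤ P_j(x) < P_{w(x)}(x) + ε / τ_{jj}. -/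
open Finset

def noisyProb {k : ℕ} (τ : Fin k → Fin k → ℝ) (p : Fin k → ℝ) (j : Fin k) : ℝ :=
  ∑ i, τ i j * p i

lemma noisyProb_eq_diag_add_sum_erase {k : ℕ} (τ : Fin k → Fin k → ℝ) (p : Fin k → ℝ)
    (j : Fin k) :
    noisyProb τ p j = τ j j * p j + ∑ l ∈ univ.erase j, τ l j * p l :=
  (add_sum_erase _ _ (mem_univ j)).symm

lemma diag_mul_lt_of_approx_lt_threshold {k : ℕ} {τ : Fin k → Fin k → ℝ} {p s : Fin k → ℝ}
    {j : Fin k} {q ε α : ℝ} (happrox : |s j - noisyProb τ p j| ≤ ε) (hs : s j < α)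
    (hα : α ≤ τ j j * q + ∑ l ∈ univ.erase j, τ l j * p l) :
    τ j j * p j < τ j j * q + ε := by
  rw [noisyProb_eq_diag_add_sum_erase] at happrox
  linarith [(abs_le.1 happrox).1]

lemma lt_add_div_of_mul_lt_mul_add {a b c ε : ℝ} (hc : 0 < c) (h : c * a < c * b + ε) :
    a < b + ε / c := by
  rw [← sub_lt_iff_lt_add', lt_div_iff₀ hc]
  linarith

theorem confes_pointwise_lemma1_general
    {X : Type*} {k : ℕ}
    (P : X → Fin k → ℝ)
    (τ : Fin k → Fin k → ℝ)
    (hτ_diag : ∀ j, 0 < τ j j)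
    (v w : X → Fin k)
    (hv : ∀ x l, P x l ≤ P x (v x))
    (f : X → Fin k → ℝ)
    (ε : ℝ)
    (happrox : ∀ x l, |f x l - ∑ i, τ i l * P x i| ≤ ε)
    (α : ℝ) (x : X) (j : Fin k)
    (hjv : j = v x)
    (hconf : f x j < α)
    (hα : α ≤ τ j j * P x (w x) + ∑ l ∈ Finset.univ.erase j, τ l j * P x l) :
    P x (w x) ≤ P x j ∧ P x j < P x (w x) + ε / τ j j :=
  ⟨hjv ▸ hv x (w x), lt_add_div_of_mul_lt_mul_add (hτ_diag j)
    (diag_mul_lt_of_approx_lt_threshold (happrox x j) hconf hα)⟩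

theorem confes_pointwise_lemma1
    {X : Type*} {k : ℕ} (hk : 2 ≤ k)
    (P : X → Fin k → ℝ)
    (hP_nonneg : ∀ x l, 0 ≤ P x l) (hP_sum : ∀ x, ∑ l, P x l = 1)
    (τ : Fin k → Fin k → ℝ)
    (hτ_nonneg : ∀ l j, 0 ≤ τ l j) (hτ_sum : ∀ l, ∑ j, τ l j = 1)
    (hτ_diag : ∀ j, 0 < τ j j)
    (v w y' : X → Fin k)
    (hv : ∀ x l, P x l ≤ P x (v x))
    (hw_ne : ∀ x, w x ≠ v x)
    (hw : ∀ x l, l ≠ v x → P x l ≤ P x (w x))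
    (f : X → Fin k → ℝ)
    (hf_nonneg : ∀ x l, 0 ≤ f x l) (hf_sum : ∀ x, ∑ l, f x l = 1)
    (hy' : ∀ x l, f x l ≤ f x (y' x))
    (ε : ℝ) (hε : 0 < ε)
    (happrox : ∀ x l, |f x l - ∑ i, τ i l * P x i| ≤ ε)
    (α : ℝ) (x : X) (j : Fin k)
    (hjv : j = v x)
    (hconf : f x j < α)
    (hα : α ≤ τ j j * P x (w x) + ∑ l ∈ Finset.univ.erase j, τ l j * P x l) :
    P x (w x) ≤ P x j ∧ P x j < P x (w x) + ε / τ j j :=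
  confes_pointwise_lemma1_general P τ hτ_diag v w hv f ε happrox α x j hjv hconf hα
end

section
/- (Intermediate measure bound for Case I, Equation (14).) Assume the setup below, and suppose the threshold α ∈ ℝ satisfies, for every x ∈ X and every label j ∈ Fin k, α ≤ −σ_j(x) + τ_{y'(x) y'(x)} · P_{w(x)}(x) + ∑_{l ≠ y'(x)} τ_{l y'(x)} · P_l(x). Then ν{(x, j) : j ≠ v(x) and E_C(x, j) ≤ α} ≤ μ_X{x : P_{w(x)}(x) ≤ P_{y'(x)}(x) ≤ P_{w(x)}(x) + ε / min_l τ_{ll}} + ν{(x, j) : j ≠ v(x) and v(x) ≠ y'(x)}. -/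
/-!
If the Bayes label is predicted (`v x = y' x`), then `P_w ≤ P_{y'}`, and a confidence error at
most `α` together with the bound on `α` gives `σ_{y'} ≤ τ_{y'y'} P_w + ∑_{l ≠ y'} τ_{ly'} P_l`.
Since `σ_{y'} ≥ P̃_{y'} - ε = τ_{y'y'} P_{y'} + ∑_{l ≠ y'} τ_{ly'} P_l - ε`, this leaves
`τ_{y'y'} (P_{y'} - P_w) ≤ ε`, so `x` lies in the band. The remaining samples with `j ≠ v x`
have `v x ≠ y' x`, and the band event is measured through the first marginal of `ν`.
-/

open MeasureTheory Finset

section NoisyPosterior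

variable {ι : Type*} [Fintype ι] [DecidableEq ι] (τ : ι → ι → ℝ) (p : ι → ℝ)

lemma diag_mul_sub_le_of_abs_sub_le {c : ι} {q s ε : ℝ}
    (happrox : |s - ∑ i, τ i c * p i| ≤ ε)
    (hs : s ≤ τ c c * q + ∑ l ∈ univ.erase c, τ l c * p l) :
    τ c c * (p c - q) ≤ ε := by
  have hsplit := add_sum_erase univ (fun i => τ i c * p i) (mem_univ c)
  linarith [(abs_le.mp happrox).1]

lemma le_add_div_ciInf_diag (hτ : ∀ j, 0 < τ j j) {c : ι} {q s ε : ℝ} (hε : 0 ≤ ε)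
    (happrox : |s - ∑ i, τ i c * p i| ≤ ε)
    (hs : s ≤ τ c c * q + ∑ l ∈ univ.erase c, τ l c * p l) :
    p c ≤ q + ε / ⨅ l, τ l l := by
  have : Nonempty ι := ⟨c⟩
  obtain ⟨m, hm⟩ := exists_eq_ciInf_of_finite (f := fun l => τ l l)
  have hmin_pos : 0 < ⨅ l, τ l l := hm ▸ hτ m
  have hmin_le : ⨅ l, τ l l ≤ τ c c := ciInf_le (Finite.bddBelow_range _) c
  have hgap : p c - q ≤ ε / ⨅ l, τ l l :=
    calc p c - q ≤ ε / τ c c :=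
          (le_div_iff₀' (hτ c)).2 (diag_mul_sub_le_of_abs_sub_le τ p happrox hs)
      _ ≤ ε / ⨅ l, τ l l := div_le_div_of_nonneg_left hε hmin_pos hmin_le
  linarith

end NoisyPosterior

lemma measure_le_map_fst_add {X Y : Type*} [MeasurableSpace X] [MeasurableSpace Y]
    (ν : Measure (X × Y)) {S T : Set (X × Y)} {B : Set X} (h : S ⊆ Prod.fst ⁻¹' B ∪ T) :
    ν S ≤ ν.map Prod.fst B + ν T :=
  calc ν S ≤ ν (Prod.fst ⁻¹' B ∪ T) := measure_mono h
    _ ≤ ν (Prod.fst ⁻¹' B) + ν T := measure_union_le _ _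
    _ ≤ ν.map Prod.fst B + ν T := by
      gcongr
      exact Measure.le_map_apply measurable_fst.aemeasurable B

theorem confes_intermediate_caseI_general
    {X : Type*} [MeasurableSpace X] {k : ℕ}
    (P : X → Fin k → ℝ)
    (τ : Fin k → Fin k → ℝ)
    (hτ_diag : ∀ j, 0 < τ j j)
    (v w y' : X → Fin k)
    (hv : ∀ x l, P x l ≤ P x (v x))
    (f : X → Fin k → ℝ)
    (ε : ℝ) (hε : 0 < ε)
    (happrox : ∀ x l, |f x l - ∑ i, τ i l * P x i| ≤ ε)
    (μX : Measure X)
    (ν : Measure (X × Fin k))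
    (hmarg : ν.map Prod.fst = μX)
    (α : ℝ)
    (hα : ∀ x, ∀ j : Fin k, α ≤ -f x j + τ (y' x) (y' x) * P x (w x)
        + ∑ l ∈ Finset.univ.erase (y' x), τ l (y' x) * P x l) :
    ν {p : X × Fin k | p.2 ≠ v p.1 ∧ f p.1 (y' p.1) - f p.1 p.2 ≤ α}
      ≤ μX {x | P x (w x) ≤ P x (y' x) ∧ P x (y' x) ≤ P x (w x) + ε / ⨅ l, τ l l}
        + ν {p : X × Fin k | p.2 ≠ v p.1 ∧ v p.1 ≠ y' p.1} := by
  rw [← hmarg]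
  refine measure_le_map_fst_add ν ?_
  rintro ⟨x, j⟩ ⟨hj, hconf⟩
  by_cases hvy : v x = y' x
  · refine Or.inl ⟨hvy ▸ hv x (w x), ?_⟩
    exact le_add_div_ciInf_diag τ (P x) hτ_diag hε.le (happrox x (y' x)) (by linarith [hα x j])
  · exact Or.inr ⟨hj, hvy⟩

theorem confes_intermediate_caseI
    {X : Type*} [MeasurableSpace X] {k : ℕ} (hk : 2 ≤ k)
    (P : X → Fin k → ℝ)
    (hP_nonneg : ∀ x l, 0 ≤ P x l) (hP_sum : ∀ x, ∑ l, P x l = 1)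
    (τ : Fin k → Fin k → ℝ)
    (hτ_nonneg : ∀ l j, 0 ≤ τ l j) (hτ_sum : ∀ l, ∑ j, τ l j = 1)
    (hτ_diag : ∀ j, 0 < τ j j)
    (v w y' : X → Fin k)
    (hv : ∀ x l, P x l ≤ P x (v x))
    (hw_ne : ∀ x, w x ≠ v x)
    (hw : ∀ x l, l ≠ v x → P x l ≤ P x (w x))
    (f : X → Fin k → ℝ)
    (hf_nonneg : ∀ x l, 0 ≤ f x l) (hf_sum : ∀ x, ∑ l, f x l = 1)
    (hy' : ∀ x l, f x l ≤ f x (y' x))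
    (ε : ℝ) (hε : 0 < ε)
    (happrox : ∀ x l, |f x l - ∑ i, τ i l * P x i| ≤ ε)
    (hP_meas : ∀ l, Measurable fun x => P x l)
    (hf_meas : ∀ l, Measurable fun x => f x l)
    (hv_meas : Measurable v) (hw_meas : Measurable w) (hy'_meas : Measurable y')
    (μX : Measure X) [IsProbabilityMeasure μX]
    (ν : Measure (X × Fin k)) [IsProbabilityMeasure ν]
    (hmarg : ν.map Prod.fst = μX)
    (α : ℝ)
    (hα : ∀ x, ∀ j : Fin k, α ≤ -f x j + τ (y' x) (y' x) * P x (w x)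
        + ∑ l ∈ Finset.univ.erase (y' x), τ l (y' x) * P x l) :
    ν {p : X × Fin k | p.2 ≠ v p.1 ∧ f p.1 (y' p.1) - f p.1 p.2 ≤ α}
      ≤ μX {x | P x (w x) ≤ P x (y' x) ∧ P x (y' x) ≤ P x (w x) + ε / ⨅ l, τ l l}
        + ν {p : X × Fin k | p.2 ≠ v p.1 ∧ v p.1 ≠ y' p.1} :=
  confes_intermediate_caseI_general P τ hτ_diag v w y' hv f ε hε happrox μX ν hmarg α hα
end

section
/- (Intermediate measure bound for Case II, Equation (19).) Assume the setup below, and suppose the threshold α satisfies α ≥ 0 and, for every x ∈ X and every label j ∈ Fin k, α ≥ σ_{y'(x)}(x) − τ_{jj} · P_{w(x)}(x) − ∑_{l ≠ j} τ_{lj} · P_l(x). Then ν{(x, j) : j = v(x) and E_C(x, j) > α} ≤ μ_X{x : P_{v(x)}(x) ≤ P_{w(x)}(x) + ε / min_l τ_{ll}}. -/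
/-! On the event `j = v x` the two hypotheses squeeze `σ_{v(x)}(x)` from both sides: the
approximation bound gives `σ_{v(x)} ≥ τ_{vv} P_v + R - ε` and the threshold bound gives
`σ_{v(x)} < σ_{y'(x)} - α ≤ τ_{vv} P_w + R`, with the same off-diagonal mass `R`. Hence
`τ_{vv} (P_v - P_w) < ε`, so `x` lies in the set on the right, and the first marginal of `ν`
transfers the bound to `μ_X`. -/

open MeasureTheory Finset

lemma diag_mul_lt_add_of_threshold {k : ℕ} {τ : Fin k → Fin k → ℝ} {p σ : Fin k → ℝ}
    {ε α : ℝ} {j m y : Fin k}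
    (happrox : |σ j - ∑ i, τ i j * p i| ≤ ε)
    (hα : σ y - τ j j * p m - ∑ l ∈ univ.erase j, τ l j * p l ≤ α)
    (hgt : α < σ y - σ j) :
    τ j j * p j < τ j j * p m + ε := by
  have hsplit : ∑ i, τ i j * p i = τ j j * p j + ∑ l ∈ univ.erase j, τ l j * p l :=
    (add_sum_erase _ _ (mem_univ j)).symm
  linarith [(abs_le.mp happrox).1]

lemma lt_add_div_iInf_of_mul_lt {ι : Type*} [Finite ι] {d : ι → ℝ} (hd : ∀ i, 0 < d i)
    {a b ε : ℝ} (hε : 0 ≤ ε) (j : ι) (h : d j * a < d j * b + ε) :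
    a < b + ε / ⨅ i, d i := by
  have : Nonempty ι := ⟨j⟩
  obtain ⟨i, hi⟩ := exists_eq_ciInf_of_finite (f := d)
  have hpos : 0 < ⨅ i, d i := hi ▸ hd i
  calc a < b + ε / d j := by
        rw [← sub_lt_iff_lt_add', lt_div_iff₀ (hd j)]
        linarith
    _ ≤ b + ε / ⨅ i, d i := by
        gcongr
        exact ciInf_le (Set.finite_range d).bddBelow j

theorem confes_intermediate_caseII_general
    {X : Type*} [MeasurableSpace X] {k : ℕ}
    (P : X → Fin k → ℝ)
    (τ : Fin k → Fin k → ℝ)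
    (hτ_diag : ∀ j, 0 < τ j j)
    (v w y' : X → Fin k)
    (f : X → Fin k → ℝ)
    (ε : ℝ) (hε : 0 < ε)
    (happrox : ∀ x l, |f x l - ∑ i, τ i l * P x i| ≤ ε)
    (μX : Measure X)
    (ν : Measure (X × Fin k))
    (hmarg : ν.map Prod.fst = μX)
    (α : ℝ)
    (hα : ∀ x, ∀ j : Fin k, f x (y' x) - τ j j * P x (w x)
        - ∑ l ∈ Finset.univ.erase j, τ l j * P x l ≤ α) :
    ν {p : X × Fin k | p.2 = v p.1 ∧ α < f p.1 (y' p.1) - f p.1 p.2}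
      ≤ μX {x | P x (v x) ≤ P x (w x) + ε / ⨅ l, τ l l} := by
  set S : Set X := {x | P x (v x) ≤ P x (w x) + ε / ⨅ l, τ l l}
  have hsub : {p : X × Fin k | p.2 = v p.1 ∧ α < f p.1 (y' p.1) - f p.1 p.2}
      ⊆ Prod.fst ⁻¹' S := by
    rintro ⟨x, j⟩ ⟨hj, hgt⟩
    dsimp only at hj hgt
    subst hj
    exact (lt_add_div_iInf_of_mul_lt hτ_diag hε.le (v x)
      (diag_mul_lt_add_of_threshold (happrox x (v x)) (hα x (v x)) hgt)).le
  calc ν {p : X × Fin k | p.2 = v p.1 ∧ α < f p.1 (y' p.1) - f p.1 p.2}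
      ≤ ν (Prod.fst ⁻¹' S) := measure_mono hsub
    _ ≤ ν.map Prod.fst S := Measure.le_map_apply measurable_fst.aemeasurable S
    _ = μX S := by rw [hmarg]

theorem confes_intermediate_caseII
    {X : Type*} [MeasurableSpace X] {k : ℕ} (hk : 2 ≤ k)
    (P : X → Fin k → ℝ)
    (hP_nonneg : ∀ x l, 0 ≤ P x l) (hP_sum : ∀ x, ∑ l, P x l = 1)
    (τ : Fin k → Fin k → ℝ)
    (hτ_nonneg : ∀ l j, 0 ≤ τ l j) (hτ_sum : ∀ l, ∑ j, τ l j = 1)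
    (hτ_diag : ∀ j, 0 < τ j j)
    (v w y' : X → Fin k)
    (hv : ∀ x l, P x l ≤ P x (v x))
    (hw_ne : ∀ x, w x ≠ v x)
    (hw : ∀ x l, l ≠ v x → P x l ≤ P x (w x))
    (f : X → Fin k → ℝ)
    (hf_nonneg : ∀ x l, 0 ≤ f x l) (hf_sum : ∀ x, ∑ l, f x l = 1)
    (hy' : ∀ x l, f x l ≤ f x (y' x))
    (ε : ℝ) (hε : 0 < ε)
    (happrox : ∀ x l, |f x l - ∑ i, τ i l * P x i| ≤ ε)
    (hP_meas : ∀ l, Measurable fun x => P x l)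
    (hf_meas : ∀ l, Measurable fun x => f x l)
    (hv_meas : Measurable v) (hw_meas : Measurable w) (hy'_meas : Measurable y')
    (μX : Measure X) [IsProbabilityMeasure μX]
    (ν : Measure (X × Fin k)) [IsProbabilityMeasure ν]
    (hmarg : ν.map Prod.fst = μX)
    (α : ℝ) (hα0 : 0 ≤ α)
    (hα : ∀ x, ∀ j : Fin k, f x (y' x) - τ j j * P x (w x)
        - ∑ l ∈ Finset.univ.erase j, τ l j * P x l ≤ α) :
    ν {p : X × Fin k | p.2 = v p.1 ∧ α < f p.1 (y' p.1) - f p.1 p.2}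
      ≤ μX {x | P x (v x) ≤ P x (w x) + ε / ⨅ l, τ l l} :=
  confes_intermediate_caseII_general P τ hτ_diag v w y' f ε hε happrox μX ν hmarg α hα
end

section
/- (Intermediate measure bound for Lemma 1.) Assume the setup below, and suppose the threshold α ∈ ℝ satisfies, for every x ∈ X and every label j ∈ Fin k, α ≤ τ_{jj} · P_{w(x)}(x) + ∑_{l ≠ j} τ_{lj} · P_l(x). Then ν{(x, j) : j = v(x) and σ_j(x) < α} ≤ μ_X{x : P_{v(x)}(x) ≤ P_{w(x)}(x) + ε / min_l τ_{ll}}. -/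
/-!
The bound is pointwise. If `σ_j(x) < α` with `j = v(x)`, subtract the threshold inequality at `j`
from `σ_j(x) ≥ P̃_j(x) - ε`: the off-diagonal sums cancel and `τ_jj (P_v(x) - P_w(x)) < ε` remains.
Since `μ_X` is the first marginal of `ν`, `ν S ≤ μ_X A` whenever `S ⊆ A × Fin k`.
-/

open MeasureTheory Finset

section ThresholdBound

variable {ι : Type*} [Fintype ι] [DecidableEq ι] {τ : ι → ι → ℝ} {p q : ι → ℝ} {ε α : ℝ}
  {j m : ι}

lemma diag_mul_sub_lt_of_lt_threshold (happrox : |q j - ∑ i, τ i j * p i| ≤ ε)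
    (hα : α ≤ τ j j * p m + ∑ l ∈ univ.erase j, τ l j * p l) (hq : q j < α) :
    τ j j * (p j - p m) < ε := by
  rw [← add_sum_erase _ _ (mem_univ j)] at happrox
  linarith [(abs_le.mp happrox).1]

lemma le_add_div_iInf_diag_of_lt_threshold (hτ : ∀ i, 0 < τ i i)
    (happrox : |q j - ∑ i, τ i j * p i| ≤ ε)
    (hα : α ≤ τ j j * p m + ∑ l ∈ univ.erase j, τ l j * p l) (hq : q j < α) :
    p j ≤ p m + ε / ⨅ l, τ l l := by
  have : Nonempty ι := ⟨j⟩
  have hε : 0 ≤ ε := (abs_nonneg _).trans happrox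
  have hmin_pos : 0 < ⨅ l, τ l l := by
    obtain ⟨i, hi⟩ := exists_eq_ciInf_of_finite (f := fun l => τ l l)
    exact hi ▸ hτ i
  have hmin_le : ⨅ l, τ l l ≤ τ j j := ciInf_le (Set.finite_range _).bddBelow j
  have hgap : p j - p m < ε / τ j j := by
    rw [lt_div_iff₀' (hτ j)]
    exact diag_mul_sub_lt_of_lt_threshold happrox hα hq
  linarith [div_le_div_of_nonneg_left hε hmin_pos hmin_le]

end ThresholdBound

theorem confes_intermediate_lemma1_general
    {X : Type*} [MeasurableSpace X] {k : ℕ}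
    (P : X → Fin k → ℝ)
    (τ : Fin k → Fin k → ℝ)
    (hτ_diag : ∀ j, 0 < τ j j)
    (v w : X → Fin k)
    (f : X → Fin k → ℝ)
    (ε : ℝ)
    (happrox : ∀ x l, |f x l - ∑ i, τ i l * P x i| ≤ ε)
    (μX : Measure X)
    (ν : Measure (X × Fin k))
    (hmarg : ν.map Prod.fst = μX)
    (α : ℝ)
    (hα : ∀ x, ∀ j : Fin k, α ≤ τ j j * P x (w x)
        + ∑ l ∈ Finset.univ.erase j, τ l j * P x l) :
    ν {p : X × Fin k | p.2 = v p.1 ∧ f p.1 p.2 < α}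
      ≤ μX {x | P x (v x) ≤ P x (w x) + ε / ⨅ l, τ l l} := by
  have hsub : {p : X × Fin k | p.2 = v p.1 ∧ f p.1 p.2 < α}
      ⊆ Prod.fst ⁻¹' {x | P x (v x) ≤ P x (w x) + ε / ⨅ l, τ l l} := by
    rintro ⟨x, j⟩ ⟨rfl : j = v x, hfα⟩
    exact le_add_div_iInf_diag_of_lt_threshold hτ_diag (happrox x _) (hα x _) hfα
  calc ν {p : X × Fin k | p.2 = v p.1 ∧ f p.1 p.2 < α}
      ≤ ν (Prod.fst ⁻¹' {x | P x (v x) ≤ P x (w x) + ε / ⨅ l, τ l l}) := measure_mono hsub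
    _ ≤ ν.map Prod.fst {x | P x (v x) ≤ P x (w x) + ε / ⨅ l, τ l l} :=
        Measure.le_map_apply measurable_fst.aemeasurable _
    _ = μX {x | P x (v x) ≤ P x (w x) + ε / ⨅ l, τ l l} := by rw [hmarg]

theorem confes_intermediate_lemma1
    {X : Type*} [MeasurableSpace X] {k : ℕ} (hk : 2 ≤ k)
    (P : X → Fin k → ℝ)
    (hP_nonneg : ∀ x l, 0 ≤ P x l) (hP_sum : ∀ x, ∑ l, P x l = 1)
    (τ : Fin k → Fin k → ℝ)
    (hτ_nonneg : ∀ l j, 0 ≤ τ l j) (hτ_sum : ∀ l, ∑ j, τ l j = 1)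
    (hτ_diag : ∀ j, 0 < τ j j)
    (v w y' : X → Fin k)
    (hv : ∀ x l, P x l ≤ P x (v x))
    (hw_ne : ∀ x, w x ≠ v x)
    (hw : ∀ x l, l ≠ v x → P x l ≤ P x (w x))
    (f : X → Fin k → ℝ)
    (hf_nonneg : ∀ x l, 0 ≤ f x l) (hf_sum : ∀ x, ∑ l, f x l = 1)
    (hy' : ∀ x l, f x l ≤ f x (y' x))
    (ε : ℝ) (hε : 0 < ε)
    (happrox : ∀ x l, |f x l - ∑ i, τ i l * P x i| ≤ ε)
    (hP_meas : ∀ l, Measurable fun x => P x l)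
    (hf_meas : ∀ l, Measurable fun x => f x l)
    (hv_meas : Measurable v) (hw_meas : Measurable w) (hy'_meas : Measurable y')
    (μX : Measure X) [IsProbabilityMeasure μX]
    (ν : Measure (X × Fin k)) [IsProbabilityMeasure ν]
    (hmarg : ν.map Prod.fst = μX)
    (α : ℝ)
    (hα : ∀ x, ∀ j : Fin k, α ≤ τ j j * P x (w x)
        + ∑ l ∈ Finset.univ.erase j, τ l j * P x l) :
    ν {p : X × Fin k | p.2 = v p.1 ∧ f p.1 p.2 < α}
      ≤ μX {x | P x (v x) ≤ P x (w x) + ε / ⨅ l, τ l l} :=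
  confes_intermediate_lemma1_general P τ hτ_diag v w f ε happrox μX ν hmarg α hα
end
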